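/- Let A = (Q, Σ, Δ, q0, F) be an NFA. Suppose there exist states q, q' ∈ Q and q_r ∈ Q \ F, and strings s0, s, s1 ∈ Σ* such that: (i) there is a run of A from q0 to q labeled by s0, (ii) there exist a run π1 from q to q labeled by s, a run π2 from q to q' labeled by s with π1 ≠ π2, and a run π3 from q' to q' labeled by s, and (iii) there is a run of A from q' to q_r labeled by s1. Then for every natural number k ≥ 1, the number of distinct runs of A from q0 to q_r labeled by the concatenation s0·s^k·s1 is at least k. -/

import Mathlib

/-- A nondeterministic finite automaton `A = (Q, Σ, Δ, q0, F)` with state type `Q`,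
alphabet `A`, transition function `δ`, initial state `q0` and accepting states `F`. -/
structure NFA' (Q A : Type*) where
  δ : Q → A → Set Q
  q0 : Q
  F : Set Q

namespace NFA'

variable {Q A : Type*}

/-- `ρ` is a run of the automaton labeled by the word `w`: the state sequence
`ρ 0, ρ 1, …, ρ |w|` follows transitions of `M` along the letters of `w`. -/
def IsRunOn (M : NFA' Q A) (w : List A) (ρ : Fin (w.length + 1) → Q) : Prop :=
  ∀ i : Fin w.length, ρ i.succ ∈ M.δ (ρ i.castSucc) (w.get i)

/-- The set of runs of `M` from `p` to `r` labeled by the word `w`,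
represented by their state sequences. -/
def Runs (M : NFA' Q A) (p r : Q) (w : List A) : Set (Fin (w.length + 1) → Q) :=
  {ρ | ρ 0 = p ∧ ρ (Fin.last w.length) = r ∧ M.IsRunOn w ρ}

end NFA'

/-- `wordPow s k` is the `k`-fold concatenation `s^k` of the word `s`. -/
def wordPow {A : Type*} (s : List A) : ℕ → List A
  | 0 => []
  | k + 1 => s ++ wordPow s k

/-! Runs glue at a shared state, and gluing is injective in each factor (for the right factor,
once its initial state is fixed). Hence a run on `u` embeds the runs on `v` into the runs on
`u ++ v`, and symmetrically. On `s^(k+1)` the runs `q → q'` contain `π₁ · R` for every run `R`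
on `s^k`, plus the run `π₂ · π₃^k`, which is none of them because its first block is `π₂ ≠ π₁`;
so each extra block adds a run. Prefixing the `s₀`-run and appending the `s₁`-run keeps them
distinct. -/

namespace NFA'

variable {Q A : Type*}

/-- Concatenation of state sequences. The state `σ 0` is dropped, so this glues two runs only
when `ρ (Fin.last _) = σ 0`. -/
def runAppend {u v : List A} (ρ : Fin (u.length + 1) → Q) (σ : Fin (v.length + 1) → Q) :
    Fin ((u ++ v).length + 1) → Q := fun i =>
  if h : (i : ℕ) ≤ u.length then ρ ⟨i, by omega⟩
  else σ ⟨i - u.length, by have := i.isLt; simp only [List.length_append] at this; omega⟩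

section Append

variable {u v : List A} {ρ ρ' : Fin (u.length + 1) → Q} {σ σ' : Fin (v.length + 1) → Q}

theorem runAppend_of_le (i : Fin ((u ++ v).length + 1)) (hi : (i : ℕ) ≤ u.length) :
    runAppend ρ σ i = ρ ⟨i, by omega⟩ := dif_pos hi

theorem runAppend_of_ge (hρσ : ρ (Fin.last _) = σ 0) (i : Fin ((u ++ v).length + 1))
    (hi : u.length ≤ i) :
    runAppend ρ σ i =
      σ ⟨i - u.length, by have := i.isLt; simp only [List.length_append] at this; omega⟩ := by
  unfold runAppend
  split_ifs with h
  · simpa [le_antisymm h hi, Fin.last] using hρσ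
  · rfl

theorem runAppend_mem_runs {M : NFA' Q A} {p q r : Q} (hρ : ρ ∈ M.Runs p q u)
    (hσ : σ ∈ M.Runs q r v) : runAppend ρ σ ∈ M.Runs p r (u ++ v) := by
  obtain ⟨hρ0, hρl, hρrun⟩ := hρ
  obtain ⟨hσ0, hσl, hσrun⟩ := hσ
  have hρσ : ρ (Fin.last _) = σ 0 := hρl.trans hσ0.symm
  refine ⟨?_, ?_, fun i => ?_⟩
  · rw [runAppend_of_le _ (by simp), ← hρ0]; rfl
  · rw [runAppend_of_ge hρσ _ (by simp), ← hσl]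
    congr
    simp
  · simp only [List.get_eq_getElem]
    by_cases hi : (i : ℕ) < u.length
    · rw [runAppend_of_le i.succ (by simpa using hi),
        runAppend_of_le i.castSucc (by simp; omega), List.getElem_append_left hi]
      exact hρrun ⟨i, hi⟩
    · have hj : (i : ℕ) - u.length < v.length := by have := i.isLt; simp at this; omega
      rw [runAppend_of_ge hρσ i.succ (by simp; omega),
        runAppend_of_ge hρσ i.castSucc (by simp; omega), List.getElem_append_right (by omega)]
      simpa [Nat.sub_add_comm (not_lt.1 hi)] using hσrun ⟨i - u.length, hj⟩

theorem runAppend_left_injective (h : runAppend ρ σ = runAppend ρ' σ') : ρ = ρ' := by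
  funext i
  have := congrFun h ⟨i, by simp; omega⟩
  rwa [runAppend_of_le _ (Nat.le_of_lt_succ i.isLt), runAppend_of_le _ (Nat.le_of_lt_succ i.isLt)]
    at this

theorem runAppend_right_injective (hρσ : ρ (Fin.last _) = σ 0)
    (hρσ' : ρ (Fin.last _) = σ' 0) (h : runAppend ρ σ = runAppend ρ σ') : σ = σ' := by
  funext j
  have := congrFun h ⟨u.length + j, by simp; omega⟩
  simpa [runAppend_of_ge hρσ, runAppend_of_ge hρσ'] using this

end Append

section Counting

variable {M : NFA' Q A} {p q r : Q} {u v : List A}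

theorem injOn_runAppend {ρ : Fin (u.length + 1) → Q} (hρ : ρ ∈ M.Runs p q u) :
    Set.InjOn (runAppend ρ) (M.Runs q r v) := fun _ hσ _ hσ' h =>
  runAppend_right_injective (hρ.2.1.trans hσ.1.symm) (hρ.2.1.trans hσ'.1.symm) h

theorem encard_runs_le_of_prefix {ρ : Fin (u.length + 1) → Q} (hρ : ρ ∈ M.Runs p q u) :
    (M.Runs q r v).encard ≤ (M.Runs p r (u ++ v)).encard := by
  rw [← (injOn_runAppend hρ).encard_image]
  exact Set.encard_le_encard (Set.image_subset_iff.2 fun _ hσ => runAppend_mem_runs hρ hσ)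

theorem encard_runs_le_of_suffix {σ : Fin (v.length + 1) → Q} (hσ : σ ∈ M.Runs q r v) :
    (M.Runs p q u).encard ≤ (M.Runs p r (u ++ v)).encard := by
  have hinj : Set.InjOn (runAppend · σ) (M.Runs p q u) :=
    fun _ _ _ _ h => runAppend_left_injective h
  rw [← hinj.encard_image]
  exact Set.encard_le_encard (Set.image_subset_iff.2 fun _ hρ => runAppend_mem_runs hρ hσ)

theorem runs_wordPow_nonempty {s : List A} (h : (M.Runs p p s).Nonempty) :
    ∀ k, (M.Runs p p (wordPow s k)).Nonempty
  | 0 => ⟨fun _ => p, rfl, rfl, fun i => i.elim0⟩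
  | k + 1 =>
    have ⟨π, hπ⟩ := h
    have ⟨τ, hτ⟩ := runs_wordPow_nonempty h k
    ⟨runAppend π τ, runAppend_mem_runs hπ hτ⟩

theorem le_encard_runs_wordPow {s : List A} {π₁ π₂ : Fin (s.length + 1) → Q}
    (hπ₁ : π₁ ∈ M.Runs p p s) (hπ₂ : π₂ ∈ M.Runs p q s) (hne : π₁ ≠ π₂)
    (hq : (M.Runs q q s).Nonempty) (k : ℕ) :
    (k : ℕ∞) ≤ (M.Runs p q (wordPow s k)).encard := by
  induction k with
  | zero => simp
  | succ k ih =>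
    obtain ⟨τ, hτ⟩ := runs_wordPow_nonempty hq k
    have hnew : runAppend π₂ τ ∉ runAppend π₁ '' M.Runs p q (wordPow s k) :=
      fun ⟨_, _, h⟩ => hne (runAppend_left_injective h)
    calc ((k + 1 : ℕ) : ℕ∞) ≤ (runAppend π₁ '' M.Runs p q (wordPow s k)).encard + 1 := by
          rw [(injOn_runAppend hπ₁).encard_image]; push_cast; gcongr
      _ = (insert (runAppend π₂ τ) (runAppend π₁ '' M.Runs p q (wordPow s k))).encard :=
          (Set.encard_insert_of_notMem hnew).symm
      _ ≤ (M.Runs p q (s ++ wordPow s k)).encard :=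
          Set.encard_le_encard (Set.insert_subset (runAppend_mem_runs hπ₂ hτ)
            (Set.image_subset_iff.2 fun _ hσ => runAppend_mem_runs hπ₁ hσ))

end Counting

end NFA'

theorem vulnerable_superlinear_runs_general {Q A : Type*} (M : NFA' Q A) (q q' qr : Q)
    (s₀ s s₁ : List A)
    (hpre : (M.Runs M.q0 q s₀).Nonempty)
    (hcore : ∃ π₁ π₂ π₃, π₁ ∈ M.Runs q q s ∧ π₂ ∈ M.Runs q q' s ∧ π₁ ≠ π₂ ∧
      π₃ ∈ M.Runs q' q' s)
    (hsuf : (M.Runs q' qr s₁).Nonempty) :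
    ∀ k : ℕ, 1 ≤ k →
      (k : ℕ∞) ≤ (M.Runs M.q0 qr (s₀ ++ wordPow s k ++ s₁)).encard := by
  intro k _
  obtain ⟨ρ₀, hρ₀⟩ := hpre
  obtain ⟨π₁, π₂, π₃, hπ₁, hπ₂, hne, hπ₃⟩ := hcore
  obtain ⟨σ, hσ⟩ := hsuf
  calc (k : ℕ∞) ≤ (M.Runs q q' (wordPow s k)).encard :=
        NFA'.le_encard_runs_wordPow hπ₁ hπ₂ hne ⟨π₃, hπ₃⟩ k
    _ ≤ (M.Runs M.q0 q' (s₀ ++ wordPow s k)).encard := NFA'.encard_runs_le_of_prefix hρ₀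
    _ ≤ _ := NFA'.encard_runs_le_of_suffix hσ

/-- If `q` is reachable from `q0` via `s0`, there are a loop `π₁` at `q`, a run `π₂` from
`q` to `q'` with `π₁ ≠ π₂`, and a loop `π₃` at `q'`, all labeled by `s`, and a run from
`q'` to a non-accepting state `q_r` labeled `s1`, then for every `k ≥ 1` the number of
distinct runs from `q0` to `q_r` labeled `s0 · s^k · s1` is at least `k`. -/
theorem vulnerable_superlinear_runs {Q A : Type*} (M : NFA' Q A) (q q' qr : Q)
    (hqr : qr ∉ M.F) (s₀ s s₁ : List A)
    (hpre : (M.Runs M.q0 q s₀).Nonempty)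
    (hcore : ∃ π₁ π₂ π₃, π₁ ∈ M.Runs q q s ∧ π₂ ∈ M.Runs q q' s ∧ π₁ ≠ π₂ ∧
      π₃ ∈ M.Runs q' q' s)
    (hsuf : (M.Runs q' qr s₁).Nonempty) :
    ∀ k : ℕ, 1 ≤ k →
      (k : ℕ∞) ≤ (M.Runs M.q0 qr (s₀ ++ wordPow s k ++ s₁)).encard :=
  vulnerable_superlinear_runs_general M q q' qr s₀ s s₁ hpre hcore hsuf
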